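/- arXiv:math/0701038 — 3 statements merged into one kernel-verified Lean document; each statement's English description precedes it below -/
import Mathlib

section
/- The four complexes S^3_{8,35}, S^3_{8,36}, S^3_{8,37}, S^3_{8,38} are pairwise non-isomorphic. -/
/-! Basic framework for finite simplicial complexes, pseudomanifolds and
bistellar moves, following Datta–Nilakantan. A complex is recorded as the
finite set of its faces (nonempty finite subsets of the vertex type). -/

namespace NPM

variable {α β : Type*} [DecidableEq α] [DecidableEq β]

/-- A "complex" datum: a finite family of finite subsets of `α`. -/
abbrev Complex (α : Type*) := Finset (Finset α)

/-- `K` is a simplicial complex: a nonempty collection of nonempty sets,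
closed under passing to nonempty subsets. -/
def IsComplex (K : Complex α) : Prop :=
  K.Nonempty ∧ (∀ σ ∈ K, σ.Nonempty) ∧ ∀ σ ∈ K, ∀ τ ⊆ σ, τ.Nonempty → τ ∈ K

/-- The vertex set of `K`. -/
def verts (K : Complex α) : Finset α := K.sup id

/-- `K` is pure of dimension `d`: every face is contained in a face with
`d+1` vertices. -/
def IsPure (K : Complex α) (d : ℕ) : Prop :=
  ∀ σ ∈ K, ∃ τ ∈ K, σ ⊆ τ ∧ τ.card = d + 1

/-- The facets ("`d`-faces") of a pure `d`-dimensional complex. -/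
def facets (K : Complex α) (d : ℕ) : Complex α := K.filter (fun σ => σ.card = d + 1)

/-- The link of a face `σ` in `K`. -/
def link (K : Complex α) (σ : Finset α) : Complex α :=
  K.filter (fun τ => Disjoint τ σ ∧ σ ∪ τ ∈ K)

/-- The degree of a face: the number of vertices of its link. -/
def degree (K : Complex α) (σ : Finset α) : ℕ := (verts (link K σ)).card

/-- A weak `d`-pseudomanifold: a pure `d`-dimensional complex in which every
`(d-1)`-face (i.e. face with `d` vertices) lies in exactly two facets. -/
def WeakPM (K : Complex α) (d : ℕ) : Prop :=
  IsComplex K ∧ IsPure K d ∧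
    ∀ σ ∈ K, σ.card = d → (K.filter fun τ => σ ⊆ τ ∧ τ.card = d + 1).card = 2

/-- Strong connectedness: any two facets are joined by a chain of facets in
which consecutive facets meet in a `(d-1)`-face. -/
def SConn (K : Complex α) (d : ℕ) : Prop :=
  ∀ σ ∈ facets K d, ∀ τ ∈ facets K d,
    Relation.ReflTransGen
      (fun a b => a ∈ facets K d ∧ b ∈ facets K d ∧ (a ∩ b).card = d) σ τ

/-- A `d`-pseudomanifold: a strongly connected weak `d`-pseudomanifold. -/
def IsPM (K : Complex α) (d : ℕ) : Prop := WeakPM K d ∧ SConn K d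

/-- Connectedness of a complex: the graph of vertices and edges is connected. -/
def Conn (K : Complex α) : Prop :=
  (verts K).Nonempty ∧ ∀ u ∈ verts K, ∀ v ∈ verts K,
    Relation.ReflTransGen (fun a b => a ≠ b ∧ ({a, b} : Finset α) ∈ K) u v

/-- A normal `d`-pseudomanifold: a connected weak `d`-pseudomanifold in which
the link of every face of dimension `≤ d - 2` is connected. -/
def NormalPM (K : Complex α) (d : ℕ) : Prop :=
  WeakPM K d ∧ Conn K ∧ ∀ σ ∈ K, σ.card + 1 ≤ d → Conn (link K σ)

/-- `K` is neighbourly: every pair of vertices forms an edge. -/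
def Neighbourly (K : Complex α) : Prop :=
  ∀ u ∈ verts K, ∀ v ∈ verts K, u ≠ v → ({u, v} : Finset α) ∈ K

/-- Isomorphism of complexes: a map injective on the vertex set carrying the
faces of `K` exactly onto the faces of `L`. -/
def Iso (K : Complex α) (L : Complex β) : Prop :=
  ∃ f : α → β, Set.InjOn f ↑(verts K) ∧ L = K.image (fun σ => σ.image f)

/-- The complex generated by a family of facets: all nonempty subsets. -/
def genCx (F : Finset (Finset α)) : Complex α :=
  F.biUnion fun σ => σ.powerset.filter (fun τ => τ.Nonempty)

/-- The standard sphere on the vertex set `B`: all nonempty proper subsets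
of `B`. -/
def stdSphere (B : Finset α) : Complex α :=
  B.powerset.filter fun τ => τ.Nonempty ∧ τ ≠ B

/-- In a weak `d`-pseudomanifold, a removable `(d-i)`-face `A`: its link is a
standard sphere `S^{i-1}_{i+1}(B)` with `B` not a face.  (For `d = 3`,
`i = 1` gives removable 2-faces and `i = 2` gives removable 1-faces.) -/
def RemovableFace (d i : ℕ) (K : Complex α) (A : Finset α) : Prop :=
  A ∈ K ∧ A.card = d - i + 1 ∧
    ∃ B : Finset α, B.card = i + 1 ∧ B ∉ K ∧ link K A = stdSphere B

/-- The bistellar `i`-move (`0 < i ≤ d`) relation on weak `d`-pseudomanifolds: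
`L` is obtained from `K` by removing a removable `(d-i)`-face `A` with
`link K A = stdSphere B` and inserting the facets `(B ∪ A) \ {v}`, `v ∈ A`. -/
def BMove (d i : ℕ) (K L : Complex α) : Prop :=
  ∃ A B : Finset α, A ∈ K ∧ A.card = d - i + 1 ∧ B.card = i + 1 ∧ B ∉ K ∧
    link K A = stdSphere B ∧
    L = genCx ((facets K d).filter (fun σ => ¬ A ⊆ σ) ∪
          A.image fun v => (B ∪ A).erase v)

/-- The bistellar `0`-move: star a new vertex `w` in a facet `σ`. -/
def BMove0 (d : ℕ) (K L : Complex α) : Prop :=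
  ∃ σ w, σ ∈ K ∧ σ.card = d + 1 ∧ w ∉ verts K ∧
    L = genCx (((facets K d).erase σ) ∪ σ.image fun v => insert w (σ.erase v))

/-- A single bistellar move of any type `0 ≤ i ≤ d`. -/
def BStep (d : ℕ) (K L : Complex α) : Prop :=
  BMove0 d K L ∨ ∃ i, 0 < i ∧ i ≤ d ∧ BMove d i K L

/-- Bistellar equivalence: a finite sequence of bistellar moves. -/
def BEquiv (d : ℕ) : Complex α → Complex α → Prop :=
  Relation.ReflTransGen (BStep d)

/-- A proper bistellar move: a bistellar `i`-move with `0 < i < d`. -/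
def PMove (d : ℕ) (K L : Complex α) : Prop := ∃ i, 0 < i ∧ i < d ∧ BMove d i K L

/-- Proper bistellar equivalence. -/
def PEquiv (d : ℕ) : Complex α → Complex α → Prop :=
  Relation.ReflTransGen (PMove d)

/-- The result of the bistellar move on the face `A` of the weak
`d`-pseudomanifold `K` (deterministic form: `B` is the vertex set of
`link K A`). -/
def kappa (d : ℕ) (K : Complex α) (A : Finset α) : Complex α :=
  genCx ((facets K d).filter (fun σ => ¬ A ⊆ σ) ∪
    A.image fun v => (verts (link K A) ∪ A).erase v)

/-- A cycle: a (finite) 1-pseudomanifold. -/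
def Cycle (K : Complex α) : Prop := IsPM K 1

/-- A combinatorial 2-manifold: a weak 2-pseudomanifold all whose vertex
links are cycles. -/
def Comb2Mfd (K : Complex α) : Prop :=
  WeakPM K 2 ∧ ∀ v, ({v} : Finset α) ∈ K → Cycle (link K {v})

/-- The Euler characteristic `f₀ - f₁ + f₂` of a 2-dimensional complex. -/
def eulerChar (K : Complex α) : ℤ :=
  ((K.filter fun σ => σ.card = 1).card : ℤ) -
    ((K.filter fun σ => σ.card = 2).card : ℤ) +
    ((K.filter fun σ => σ.card = 3).card : ℤ)

/-- A combinatorial 2-sphere: a connected combinatorial 2-manifold with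
Euler characteristic 2. -/
def Comb2Sphere (K : Complex α) : Prop := Comb2Mfd K ∧ Conn K ∧ eulerChar K = 2

/-- A combinatorial 3-manifold: a 3-pseudomanifold all whose vertex links are
combinatorial 2-spheres. -/
def Comb3Mfd (K : Complex α) : Prop :=
  IsPM K 3 ∧ ∀ v, ({v} : Finset α) ∈ K → Comb2Sphere (link K {v})

end NPM

/-- The complex `S35` from the paper, generated by its facets. -/
def S35 : NPM.Complex ℕ :=
  NPM.genCx {{1,2,3,4}, {1,2,6,7}, {1,2,5,6}, {1,2,4,5}, {2,3,4,5}, {2,3,5,6}, {2,3,6,7}, {3,4,6,7}, {3,4,5,6}, {4,5,6,7}, {1,2,3,8}, {1,2,7,8}, {2,3,7,8}, {1,3,4,8}, {3,4,7,8}, {1,4,5,8}, {4,5,7,8}, {1,5,6,8}, {1,6,7,8}, {5,6,7,8}}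
/-- The complex `S36` from the paper, generated by its facets. -/
def S36 : NPM.Complex ℕ :=
  NPM.genCx {{1,2,3,4}, {1,2,5,6}, {1,2,4,5}, {1,5,6,7}, {2,3,4,5}, {2,3,5,6}, {2,3,6,7}, {3,4,6,7}, {3,4,5,6}, {4,5,6,7}, {1,2,6,8}, {1,6,7,8}, {2,6,7,8}, {1,2,3,8}, {2,3,7,8}, {1,3,4,8}, {3,4,7,8}, {1,4,5,8}, {1,5,7,8}, {4,5,7,8}}
/-- The complex `S37` from the paper, generated by its facets. -/
def S37 : NPM.Complex ℕ :=
  NPM.genCx {{1,2,3,4}, {1,2,5,6}, {1,2,4,5}, {1,4,5,7}, {2,3,4,5}, {2,3,5,6}, {2,3,6,7}, {3,4,6,7}, {3,4,5,6}, {4,5,6,7}, {1,5,6,8}, {1,5,7,8}, {5,6,7,8}, {1,2,6,8}, {2,6,7,8}, {1,2,3,8}, {2,3,7,8}, {1,3,4,8}, {1,4,7,8}, {3,4,7,8}}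
/-- The complex `S38` from the paper, generated by its facets. -/
def S38 : NPM.Complex ℕ :=
  NPM.genCx {{1,2,3,4}, {1,2,3,7}, {1,2,6,7}, {1,3,4,7}, {1,5,6,7}, {2,3,4,5}, {2,3,6,7}, {3,4,6,7}, {3,4,5,6}, {4,5,6,7}, {2,3,5,8}, {2,3,6,8}, {3,5,6,8}, {1,2,6,8}, {1,5,6,8}, {1,2,4,8}, {2,4,5,8}, {1,4,7,8}, {1,5,7,8}, {4,5,7,8}}

/-! The number of edges lying in exactly five triangles is an isomorphism invariant, and it takes
the values 0, 4, 7 and 9 on the four complexes. -/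

namespace NPM

open Finset

variable {α β : Type*} [DecidableEq α] [DecidableEq β]

/-- Sizes of faces are counted in vertices, not in dimensions. -/
def cofaceCount (K : Complex α) (j : ℕ) (σ : Finset α) : ℕ :=
  #{τ ∈ K | σ ⊆ τ ∧ τ.card = j}

def numFacesWithCofaceCount (K : Complex α) (i j m : ℕ) : ℕ :=
  #{σ ∈ K | σ.card = i ∧ cofaceCount K j σ = m}

theorem subset_verts_of_mem {K : Complex α} {σ : Finset α} (hσ : σ ∈ K) : σ ⊆ verts K :=
  le_sup (f := id) hσ

section image

variable {K : Complex α} {f : α → β}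

theorem card_filter_image_faces (hf : Set.InjOn f (verts K)) (p : Finset β → Prop)
    [DecidablePred p] : #{τ ∈ K.image (·.image f) | p τ} = #{σ ∈ K | p (σ.image f)} := by
  rw [filter_image, card_image_of_injOn]
  exact (image_injOn_powerset_of_injOn hf).mono
    fun σ hσ => mem_powerset.2 (subset_verts_of_mem (mem_filter.1 hσ).1)

theorem card_image_face (hf : Set.InjOn f (verts K)) {σ : Finset α} (hσ : σ ∈ K) :
    (σ.image f).card = σ.card :=
  card_image_of_injOn (hf.mono (subset_verts_of_mem hσ))

theorem cofaceCount_image (hf : Set.InjOn f (verts K)) {σ : Finset α} (hσ : σ ∈ K) (j : ℕ) :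
    cofaceCount (K.image (·.image f)) j (σ.image f) = cofaceCount K j σ := by
  rw [cofaceCount, card_filter_image_faces hf]
  refine congrArg card (filter_congr fun τ hτ => ?_)
  rw [image_subset_image_iff_of_injOn hf (subset_verts_of_mem hσ) (subset_verts_of_mem hτ),
    card_image_face hf hτ]

end image

theorem Iso.numFacesWithCofaceCount_eq {K : Complex α} {L : Complex β} (h : Iso K L)
    (i j m : ℕ) : numFacesWithCofaceCount K i j m = numFacesWithCofaceCount L i j m := by
  obtain ⟨f, hf, rfl⟩ := h
  rw [numFacesWithCofaceCount, numFacesWithCofaceCount, card_filter_image_faces hf]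
  refine congrArg card (filter_congr fun σ hσ => ?_)
  rw [card_image_face hf hσ, cofaceCount_image hf hσ]

set_option maxRecDepth 100000 in
theorem numFacesWithCofaceCount_S35 : numFacesWithCofaceCount S35 2 3 5 = 0 := by decide

set_option maxRecDepth 100000 in
theorem numFacesWithCofaceCount_S36 : numFacesWithCofaceCount S36 2 3 5 = 4 := by decide

set_option maxRecDepth 100000 in
theorem numFacesWithCofaceCount_S37 : numFacesWithCofaceCount S37 2 3 5 = 7 := by decide

set_option maxRecDepth 100000 in
theorem numFacesWithCofaceCount_S38 : numFacesWithCofaceCount S38 2 3 5 = 9 := by decide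

end NPM

/-- `S^3_{8,35}, S^3_{8,36}, S^3_{8,37}, S^3_{8,38}` are pairwise
non-isomorphic. -/
theorem statement4 :
    ∀ X ∈ ([S35, S36, S37, S38] : List (NPM.Complex ℕ)),
      ∀ Y ∈ ([S35, S36, S37, S38] : List (NPM.Complex ℕ)),
        X ≠ Y → ¬ NPM.Iso X Y := by
  intro X hX Y hY hne hiso
  have hinv := hiso.numFacesWithCofaceCount_eq 2 3 5
  -- `rfl` must come last: on distinct complexes it would unfold them.
  fin_cases hX <;> fin_cases hY <;>
    first
      | (simp only [NPM.numFacesWithCofaceCount_S35, NPM.numFacesWithCofaceCount_S36,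
          NPM.numFacesWithCofaceCount_S37, NPM.numFacesWithCofaceCount_S38] at hinv; omega)
      | exact hne rfl
end

section
/- For each 1 ≤ i ≤ 6, no proper bistellar move can be applied to N_i; that is, N_i has no removable 1-face and no removable 2-face (equivalently: every edge e of N_i of degree 3 has link a 3-cycle on a set which is already a 2-face of N_i, and N_i is neighbourly so no bistellar 1-move is possible). -/
/-- The complex `N1` from the paper, generated by its facets. -/
def N1 : NPM.Complex ℕ :=
  NPM.genCx {{1,2,4,8}, {1,2,6,8}, {1,3,4,8}, {1,3,7,8}, {1,5,6,8}, {1,5,7,8}, {2,3,5,8}, {2,3,7,8}, {2,4,5,8}, {2,6,7,8}, {3,4,6,8}, {3,5,6,8}, {4,5,7,8}, {4,6,7,8}, {1,2,4,7}, {1,2,5,7}, {1,3,6,7}, {1,4,6,7}, {2,3,4,7}, {2,5,6,7}, {3,4,5,7}, {3,5,6,7}, {1,2,3,6}, {2,3,4,6}, {1,3,4,5}, {1,2,3,5}, {1,4,5,6}, {2,4,5,6}}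
/-- The complex `N2` from the paper, generated by its facets. -/
def N2 : NPM.Complex ℕ :=
  NPM.genCx {{1,2,4,8}, {2,4,5,8}, {2,3,5,8}, {3,5,6,8}, {3,4,6,8}, {4,6,7,8}, {4,5,7,8}, {1,5,7,8}, {1,5,6,8}, {1,2,6,8}, {2,6,7,8}, {2,3,7,8}, {1,3,7,8}, {1,3,4,8}, {1,2,4,7}, {2,4,5,7}, {2,3,5,7}, {3,5,6,7}, {3,4,6,7}, {1,5,6,7}, {1,2,6,7}, {1,3,4,7}}
/-- The complex `N3` from the paper, generated by its facets. -/
def N3 : NPM.Complex ℕ :=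
  NPM.genCx {{1,2,4,8}, {1,2,6,8}, {1,3,4,8}, {1,3,7,8}, {1,5,6,8}, {1,5,7,8}, {2,3,5,8}, {2,3,7,8}, {2,4,5,8}, {2,6,7,8}, {3,4,6,8}, {3,5,6,8}, {4,5,7,8}, {4,6,7,8}, {1,2,3,4}, {2,3,4,7}, {2,4,5,6}, {2,4,6,7}, {3,4,5,6}, {3,4,5,7}, {1,2,3,5}, {1,2,5,6}, {1,3,5,7}}
/-- The complex `N4` from the paper, generated by its facets. -/
def N4 : NPM.Complex ℕ :=
  NPM.genCx {{1,2,4,8}, {1,2,6,8}, {1,3,4,8}, {1,3,7,8}, {1,5,6,8}, {1,5,7,8}, {2,3,5,8}, {2,3,7,8}, {2,4,5,8}, {2,6,7,8}, {3,4,6,8}, {3,5,6,8}, {4,5,7,8}, {4,6,7,8}, {1,2,4,5}, {1,2,5,6}, {2,3,5,6}, {2,3,6,7}, {3,4,6,7}, {1,3,4,7}, {1,4,5,7}}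
/-- The complex `N5` from the paper, generated by its facets. -/
def N5 : NPM.Complex ℕ :=
  NPM.genCx {{1,2,5,8}, {1,2,6,8}, {1,3,5,8}, {1,3,7,8}, {1,4,6,8}, {1,4,7,8}, {2,3,6,8}, {2,3,7,8}, {2,4,5,8}, {2,4,7,8}, {3,4,5,8}, {3,4,6,8}, {1,2,5,7}, {1,2,6,7}, {1,3,6,7}, {1,4,5,7}, {2,3,5,7}, {2,4,6,7}, {3,4,5,7}, {3,4,6,7}, {2,3,5,6}, {2,4,5,6}, {1,3,5,6}, {1,4,5,6}}
/-- The complex `N6` from the paper, generated by its facets. -/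
def N6 : NPM.Complex ℕ :=
  NPM.genCx {{1,3,5,8}, {1,3,7,8}, {1,4,6,8}, {1,4,7,8}, {1,5,6,8}, {2,3,6,8}, {2,3,7,8}, {2,4,5,8}, {2,4,7,8}, {2,5,6,8}, {3,4,5,8}, {3,4,6,8}, {1,2,3,5}, {1,2,4,5}, {1,4,5,7}, {1,5,6,7}, {2,3,5,7}, {2,5,6,7}, {3,4,5,7}, {1,2,3,6}, {1,2,4,6}, {1,3,6,7}, {2,4,6,7}, {3,4,6,7}}

/-! If `link A = ∂B` then `B` is the vertex set of the link of `A`, so `A` is removable only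
when the link's vertex set is a non-face. For removable 2-faces that set is a pair of
vertices, which spans an edge in a neighbourly complex; for removable 1-faces it is the three
link vertices of a degree-3 edge, and one checks on the facet list that they span a triangle.
In the complex generated by facets `F`, the link of `A` has vertex set `⋃ {σ \ A | A ⊆ σ ∈ F}`,
which makes both checks finite computations on `F`. -/

namespace NPM

variable {α : Type*} [DecidableEq α]

theorem mem_verts {K : Complex α} {v : α} : v ∈ verts K ↔ ∃ σ ∈ K, v ∈ σ := by
  simp [verts, Finset.mem_sup]

theorem verts_mono {K L : Complex α} (h : K ⊆ L) : verts K ⊆ verts L :=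
  Finset.sup_mono h

theorem verts_link_subset (K : Complex α) (A : Finset α) : verts (link K A) ⊆ verts K :=
  verts_mono (Finset.filter_subset _ _)

theorem verts_stdSphere {B : Finset α} (hB : 2 ≤ B.card) : verts (stdSphere B) = B := by
  ext b
  simp only [mem_verts, stdSphere, Finset.mem_filter, Finset.mem_powerset]
  constructor
  · rintro ⟨σ, ⟨hσB, -⟩, hb⟩
    exact hσB hb
  · intro hb
    refine ⟨{b}, ⟨Finset.singleton_subset_iff.mpr hb, Finset.singleton_nonempty b, ?_⟩,
      Finset.mem_singleton_self b⟩
    rintro rfl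
    simp at hB

theorem not_removableFace_of_verts_link_mem {K : Complex α} {A : Finset α} {d i : ℕ}
    (hi : 0 < i)
    (h : A ∈ K → A.card = d - i + 1 → degree K A = i + 1 → verts (link K A) ∈ K) :
    ¬ RemovableFace d i K A := by
  rintro ⟨hA, hAcard, B, hBcard, hBK, hlink⟩
  have hverts : verts (link K A) = B := hlink ▸ verts_stdSphere (by omega)
  exact hBK (hverts ▸ h hA hAcard (by rw [degree, hverts, hBcard]))

theorem verts_link_mem_of_neighbourly {K : Complex α} (hK : Neighbourly K) {A : Finset α}
    (hdeg : degree K A = 2) : verts (link K A) ∈ K := by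
  obtain ⟨u, v, huv, huv_eq⟩ := Finset.card_eq_two.mp hdeg
  have hsub := verts_link_subset K A
  rw [huv_eq] at hsub ⊢
  exact hK u (hsub (by simp)) v (hsub (by simp)) huv

theorem not_removableFace_one_of_neighbourly {K : Complex α} (hK : Neighbourly K)
    {A : Finset α} {d : ℕ} : ¬ RemovableFace d 1 K A :=
  not_removableFace_of_verts_link_mem one_pos fun _ _ hdeg =>
    verts_link_mem_of_neighbourly hK hdeg

section genCx

variable {F : Finset (Finset α)}

theorem mem_genCx {τ : Finset α} : τ ∈ genCx F ↔ τ.Nonempty ∧ ∃ σ ∈ F, τ ⊆ σ := by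
  simp only [genCx, Finset.mem_biUnion, Finset.mem_filter, Finset.mem_powerset]
  tauto

theorem verts_genCx_subset : verts (genCx F) ⊆ F.sup id := by
  intro v hv
  obtain ⟨τ, hτ, hvτ⟩ := mem_verts.mp hv
  obtain ⟨-, σ, hσ, hτσ⟩ := mem_genCx.mp hτ
  exact Finset.mem_sup.mpr ⟨σ, hσ, hτσ hvτ⟩

theorem neighbourly_genCx
    (h : ∀ u ∈ F.sup id, ∀ v ∈ F.sup id, u ≠ v → ∃ σ ∈ F, {u, v} ⊆ σ) :
    Neighbourly (genCx F) := fun u hu v hv huv =>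
  mem_genCx.mpr ⟨Finset.insert_nonempty u {v},
    h u (verts_genCx_subset hu) v (verts_genCx_subset hv) huv⟩

theorem verts_link_genCx (A : Finset α) :
    verts (link (genCx F) A) = (F.filter (A ⊆ ·)).biUnion (· \ A) := by
  ext v
  simp only [mem_verts, link, Finset.mem_filter, mem_genCx, Finset.mem_biUnion,
    Finset.mem_sdiff]
  constructor
  · rintro ⟨τ, ⟨-, hτA, -, σ, hσ, hAτσ⟩, hvτ⟩
    exact ⟨σ, ⟨hσ, Finset.subset_union_left.trans hAτσ⟩,
      hAτσ (Finset.mem_union_right A hvτ), Finset.disjoint_left.mp hτA hvτ⟩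
  · rintro ⟨σ, ⟨hσ, hAσ⟩, hvσ, hvA⟩
    have hvσ' : {v} ⊆ σ := Finset.singleton_subset_iff.mpr hvσ
    exact ⟨{v}, ⟨⟨Finset.singleton_nonempty v, σ, hσ, hvσ'⟩,
      Finset.disjoint_singleton_left.mpr hvA, (Finset.singleton_nonempty v).mono
        Finset.subset_union_right, σ, hσ, Finset.union_subset hAσ hvσ'⟩,
      Finset.mem_singleton_self v⟩

theorem verts_link_mem_genCx {k m : ℕ} (hm : 0 < m)
    (h : ∀ σ ∈ F, ∀ A ∈ σ.powersetCard k,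
      ((F.filter (A ⊆ ·)).biUnion (· \ A)).card = m →
        ∃ τ ∈ F, (F.filter (A ⊆ ·)).biUnion (· \ A) ⊆ τ)
    {A : Finset α} (hA : A ∈ genCx F) (hAcard : A.card = k)
    (hdeg : degree (genCx F) A = m) : verts (link (genCx F) A) ∈ genCx F := by
  rw [degree, verts_link_genCx] at hdeg
  obtain ⟨-, σ, hσ, hAσ⟩ := mem_genCx.mp hA
  rw [verts_link_genCx, mem_genCx]
  exact ⟨Finset.card_pos.mp (hdeg ▸ hm),
    h σ hσ A (Finset.mem_powersetCard.mpr ⟨hAσ, hAcard⟩) hdeg⟩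

end genCx

end NPM

open NPM in
/-- for `1 ≤ i ≤ 6`, no proper bistellar move applies to `N_i`:
it has no removable 1-face (`i = 2` below) and no removable 2-face
(`i = 1` below). -/
theorem statement8 :
    ∀ X ∈ ([N1, N2, N3, N4, N5, N6] : List (NPM.Complex ℕ)),
      ∀ i : ℕ, 0 < i → i < 3 → ∀ A : Finset ℕ, ¬ NPM.RemovableFace 3 i X A := by
  intro X hX i hi0 hi3 A
  obtain ⟨hneighbourly, hedges⟩ : Neighbourly X ∧
      ∀ A ∈ X, A.card = 2 → degree X A = 3 → verts (link X A) ∈ X := by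
    fin_cases hX <;>
      exact ⟨neighbourly_genCx (by decide +kernel),
        fun A => verts_link_mem_genCx three_pos (by decide +kernel)⟩
  interval_cases i
  · exact not_removableFace_one_of_neighbourly hneighbourly
  · exact not_removableFace_of_verts_link_mem two_pos (hedges A)
end

section
/- Let M be a 3-pseudomanifold with exactly n vertices, n ≥ 6, and let u be a vertex of M of degree 4. Then there exists a bistellar 1-move κ_β : M ↦ N such that the degree of u in N is 5. -/
namespace NPMAux

open NPM Finset

variable {α : Type*} [DecidableEq α]

lemma mem_verts {K : Complex α} {a : α} : a ∈ verts K ↔ ∃ σ ∈ K, a ∈ σ := by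
  simp [verts, Finset.mem_sup]

lemma mem_link {K : Complex α} {σ τ : Finset α} :
    τ ∈ link K σ ↔ τ ∈ K ∧ Disjoint τ σ ∧ σ ∪ τ ∈ K := by
  simp [link, Finset.mem_filter, and_assoc]

lemma mem_genCx {F : Finset (Finset α)} {σ : Finset α} :
    σ ∈ genCx F ↔ ∃ G ∈ F, σ ⊆ G ∧ σ.Nonempty := by
  simp [genCx]

lemma genCx_dc (F : Finset (Finset α)) :
    ∀ σ ∈ genCx F, ∀ τ ⊆ σ, τ.Nonempty → τ ∈ genCx F := by
  intro σ hσ τ hτσ hτ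
  obtain ⟨G, hG, hσG, -⟩ := mem_genCx.1 hσ
  exact mem_genCx.2 ⟨G, hG, hτσ.trans hσG, hτ⟩

lemma adj_iff {K : Complex α}
    (hdc : ∀ σ ∈ K, ∀ τ ⊆ σ, τ.Nonempty → τ ∈ K) (u a : α) :
    a ∈ verts (link K {u}) ↔ a ≠ u ∧ ({u, a} : Finset α) ∈ K := by
  constructor
  · intro h
    obtain ⟨τ, hτ, ha⟩ := mem_verts.1 h
    obtain ⟨hτK, hdisj, hun⟩ := mem_link.1 hτ
    have hne : a ≠ u := by
      rintro rfl
      exact (Finset.disjoint_left.1 hdisj ha (Finset.mem_singleton_self a))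
    refine ⟨hne, hdc _ hun _ ?_ ⟨u, by simp⟩⟩
    intro x hx
    rcases Finset.mem_insert.1 hx with rfl | hx
    · exact Finset.mem_union_left _ (Finset.mem_singleton_self x)
    · rw [Finset.mem_singleton] at hx
      subst hx
      exact Finset.mem_union_right _ ha
  · rintro ⟨hne, hK⟩
    refine mem_verts.2 ⟨{a}, mem_link.2 ⟨?_, ?_, ?_⟩, Finset.mem_singleton_self a⟩
    · exact hdc _ hK {a} (by simp) ⟨a, Finset.mem_singleton_self a⟩
    · simp [hne]
    · simpa using hK

end NPMAux


/-- in a 3-pseudomanifold with at least 6 vertices, a vertex of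
degree 4 can be given degree 5 by a single bistellar 1-move. -/
theorem statement14 {α : Type u} [DecidableEq α] (M : NPM.Complex α)
    (hM : NPM.IsPM M 3) (hn : 6 ≤ (NPM.verts M).card)
    (u : α) (hu : u ∈ NPM.verts M) (hd : NPM.degree M {u} = 4) :
    ∃ N : NPM.Complex α, NPM.BMove 3 1 M N ∧ NPM.degree N {u} = 5 := by
  classical
  obtain ⟨⟨⟨hKne, hfne, hdc⟩, hpure, htwo⟩, hconn⟩ := hM
  set V : Finset α := NPM.verts (NPM.link M {u}) with hVdef
  have hVcard : V.card = 4 := hd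
  have hadj : ∀ a, a ∈ V ↔ a ≠ u ∧ ({u, a} : Finset α) ∈ M :=
    fun a => NPMAux.adj_iff hdc u a
  have huV : u ∉ V := fun h => ((hadj u).1 h).1 rfl
  have hfacetV : ∀ F ∈ M, u ∈ F → ∀ a ∈ F, a ≠ u → a ∈ V := by
    intro F hF huF a haF hne
    refine (hadj a).2 ⟨hne, hdc F hF _ ?_ ⟨u, by simp⟩⟩
    intro x hx
    rcases Finset.mem_insert.1 hx with rfl | hx
    · exact huF
    · rw [Finset.mem_singleton] at hx; subst hx; exact haF
  have huM : ({u} : Finset α) ∈ M := by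
    obtain ⟨σ, hσ, huσ⟩ := NPMAux.mem_verts.1 hu
    exact hdc σ hσ {u} (Finset.singleton_subset_iff.2 huσ) ⟨u, by simp⟩
  obtain ⟨F₀, hF₀M, huF₀', hF₀c⟩ := hpure {u} huM
  have huF₀ : u ∈ F₀ := huF₀' (Finset.mem_singleton_self u)
  set T : Finset α := F₀.erase u with hTdef
  have huT : u ∉ T := Finset.notMem_erase u F₀
  have hTV : T ⊆ V := fun a ha =>
    hfacetV F₀ hF₀M huF₀ a (Finset.mem_of_mem_erase ha) (Finset.ne_of_mem_erase ha)
  have hTc : T.card = 3 := by rw [hTdef, Finset.card_erase_of_mem huF₀, hF₀c]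
  have hF₀eq : F₀ = insert u T := (Finset.insert_erase huF₀).symm
  have hTM : T ∈ M := hdc F₀ hF₀M T (Finset.erase_subset u F₀)
    (Finset.card_pos.1 (by rw [hTc]; norm_num))
  have hTF₀ : T ⊆ F₀ := Finset.erase_subset u F₀
  -- the second facet through T
  have h2 := htwo T hTM hTc
  obtain ⟨G, hGmem, hGne⟩ := Finset.exists_mem_ne (by rw [h2]; norm_num) F₀
  obtain ⟨hGM, hTG, hGc⟩ := Finset.mem_filter.1 hGmem
  have hF₀card4 : (insert u T).card = 4 := by
    rw [Finset.card_insert_of_notMem huT, hTc]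
  have huG : u ∉ G := by
    intro huG
    apply hGne
    have hsub : insert u T ⊆ G := Finset.insert_subset huG hTG
    have := Finset.eq_of_subset_of_card_le hsub (by rw [hGc, hF₀card4])
    rw [← this, ← hF₀eq]
  have hGT1 : (G \ T).card = 1 := by rw [Finset.card_sdiff_of_subset hTG, hGc, hTc]
  obtain ⟨v, hvdef⟩ := Finset.card_eq_one.1 hGT1
  have hvGT : v ∈ G \ T := by rw [hvdef]; exact Finset.mem_singleton_self v
  have hvG : v ∈ G := (Finset.mem_sdiff.1 hvGT).1
  have hvT : v ∉ T := (Finset.mem_sdiff.1 hvGT).2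
  have hGeq : G = insert v T := by
    have h1 := Finset.union_sdiff_of_subset hTG
    rw [hvdef] at h1
    rw [← h1]; ext x; simp [or_comm]
  have hvu : v ≠ u := by rintro rfl; exact huG hvG
  -- the "exactly two facets" identification lemma
  have htwofacets : ∀ σ ∈ M, σ.card = 3 → ∀ F₁ F₂ : Finset α, F₁ ∈ M → F₂ ∈ M →
      σ ⊆ F₁ → σ ⊆ F₂ → F₁.card = 4 → F₂.card = 4 → F₁ ≠ F₂ →
      ∀ H ∈ M, σ ⊆ H → H.card = 4 → H = F₁ ∨ H = F₂ := by
    intro σ hσM hσc F₁ F₂ h1M h2M hs1 hs2 h1c h2c hne12 H hHM hsH hHc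
    have hcard2 : ({F₁, F₂} : Finset (Finset α)).card = 2 := by
      rw [Finset.card_insert_of_notMem (by simpa using hne12), Finset.card_singleton]
    have hsubf : ({F₁, F₂} : Finset (Finset α)) ⊆
        M.filter (fun τ => σ ⊆ τ ∧ τ.card = 3 + 1) := by
      intro x hx
      rcases Finset.mem_insert.1 hx with rfl | hx
      · exact Finset.mem_filter.2 ⟨h1M, hs1, h1c⟩
      · rw [Finset.mem_singleton] at hx; subst hx
        exact Finset.mem_filter.2 ⟨h2M, hs2, h2c⟩
    have heqf := Finset.eq_of_subset_of_card_le hsubf (by rw [htwo σ hσM hσc, hcard2])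
    have : H ∈ ({F₁, F₂} : Finset (Finset α)) := by
      rw [heqf]; exact Finset.mem_filter.2 ⟨hHM, hsH, hHc⟩
    simpa using this
  by_cases hvV : v ∈ V
  · exfalso
    have hGV : G = V := by
      rw [hGeq]
      refine Finset.eq_of_subset_of_card_le (Finset.insert_subset hvV hTV) ?_
      rw [hVcard, Finset.card_insert_of_notMem hvT, hTc]
    have hVM : V ∈ M := hGV ▸ hGM
    have hVins : V = insert v T := by rw [← hGV, hGeq]
    have hstarT : ∀ t ∈ T, insert u (V.erase t) ∈ M := by
      intro t htT
      have htv : v ≠ t := fun h => hvT (h ▸ htT)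
      set σ : Finset α := insert u (T.erase t) with hσdef
      have huTe : u ∉ T.erase t := fun h => huT (Finset.mem_of_mem_erase h)
      have hσc : σ.card = 3 := by
        rw [hσdef, Finset.card_insert_of_notMem huTe, Finset.card_erase_of_mem htT, hTc]
      have hσF₀ : σ ⊆ F₀ := by
        rw [hF₀eq]
        exact Finset.insert_subset_insert u (Finset.erase_subset t T)
      have hσM : σ ∈ M := hdc F₀ hF₀M σ hσF₀ ⟨u, Finset.mem_insert_self u _⟩
      obtain ⟨H, hHmem, hHne⟩ := Finset.exists_mem_ne
        (by rw [htwo σ hσM hσc]; norm_num) F₀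
      obtain ⟨hHM, hσH, hHc⟩ := Finset.mem_filter.1 hHmem
      have hH1 : (H \ σ).card = 1 := by rw [Finset.card_sdiff_of_subset hσH, hHc, hσc]
      obtain ⟨a, hadef⟩ := Finset.card_eq_one.1 hH1
      have haHσ : a ∈ H \ σ := by rw [hadef]; exact Finset.mem_singleton_self a
      have haH : a ∈ H := (Finset.mem_sdiff.1 haHσ).1
      have haσ : a ∉ σ := (Finset.mem_sdiff.1 haHσ).2
      have hHeq : H = insert a σ := by
        have h1 := Finset.union_sdiff_of_subset hσH
        rw [hadef] at h1
        rw [← h1]; ext x; simp [or_comm]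
      have huH : u ∈ H := hσH (Finset.mem_insert_self u _)
      have hau : a ≠ u := fun h => haσ (h ▸ Finset.mem_insert_self u _)
      have haV : a ∈ V := hfacetV H hHM huH a haH hau
      have hat : a ≠ t := by
        rintro rfl
        apply hHne
        rw [hHeq, hσdef, hF₀eq, Finset.insert_comm, Finset.insert_erase htT]
      have haT : a ∉ T := by
        intro h
        exact haσ (Finset.mem_insert_of_mem (Finset.mem_erase.2 ⟨hat, h⟩))
      have hav : a = v := by
        rw [hVins, Finset.mem_insert] at haV
        rcases haV with h | h
        · exact h
        · exact absurd h haT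
      subst hav
      have hVe : V.erase t = insert a (T.erase t) := by
        rw [hVins, Finset.erase_insert_of_ne htv]
      have hfin : insert u (V.erase t) = H := by
        rw [hVe, hHeq, hσdef, Finset.insert_comm]
      rw [hfin]; exact hHM
    have hstar : ∀ t ∈ V, insert u (V.erase t) ∈ M := by
      intro t htV
      rw [hVins, Finset.mem_insert] at htV
      rcases htV with rfl | htT
      · have he : V.erase t = T := by rw [hVins, Finset.erase_insert hvT]
        rw [he, ← hF₀eq]; exact hF₀M
      · exact hstarT t htT
    have hstarc : ∀ t ∈ V, (insert u (V.erase t)).card = 4 := by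
      intro t htV
      rw [Finset.card_insert_of_notMem (fun h => huV (Finset.mem_of_mem_erase h)),
        Finset.card_erase_of_mem htV, hVcard]
    have hstep : ∀ a b : Finset α, a ⊆ insert u V → a ∈ M → a.card = 4 →
        b ∈ M → b.card = 4 → (a ∩ b).card = 3 → b ⊆ insert u V := by
      intro a b haS haM hac hbM hbc hab
      set σ : Finset α := a ∩ b with hσdef
      have hσa : σ ⊆ a := Finset.inter_subset_left
      have hσb : σ ⊆ b := Finset.inter_subset_right
      have hσc : σ.card = 3 := hab
      have hσM : σ ∈ M := hdc a haM σ hσa (Finset.card_pos.1 (by rw [hσc]; norm_num))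
      by_cases huσ : u ∈ σ
      · set ρ : Finset α := σ.erase u with hρdef
        have hρV : ρ ⊆ V := by
          intro x hx
          have hxσ := Finset.mem_of_mem_erase hx
          rcases Finset.mem_insert.1 (haS (hσa hxσ)) with rfl | h
          · exact absurd rfl (Finset.ne_of_mem_erase hx)
          · exact h
        have hρc : ρ.card = 2 := by rw [hρdef, Finset.card_erase_of_mem huσ, hσc]
        have hsd : 1 < (V \ ρ).card := by rw [Finset.card_sdiff_of_subset hρV, hVcard, hρc]; norm_num
        obtain ⟨t₁, ht₁, t₂, ht₂, ht12⟩ := Finset.one_lt_card.1 hsd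
        have ht₁V := (Finset.mem_sdiff.1 ht₁).1
        have ht₂V := (Finset.mem_sdiff.1 ht₂).1
        have ht₂ρ := (Finset.mem_sdiff.1 ht₂).2
        have hσsub : ∀ t ∈ V \ ρ, σ ⊆ insert u (V.erase t) := by
          intro t ht x hx
          rcases eq_or_ne x u with rfl | hxu
          · exact Finset.mem_insert_self x _
          · have hxρ : x ∈ ρ := Finset.mem_erase.2 ⟨hxu, hx⟩
            refine Finset.mem_insert_of_mem (Finset.mem_erase.2 ⟨?_, hρV hxρ⟩)
            rintro rfl
            exact (Finset.mem_sdiff.1 ht).2 hxρ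
        have hne12 : insert u (V.erase t₁) ≠ insert u (V.erase t₂) := by
          intro h
          have hmem : t₂ ∈ insert u (V.erase t₁) :=
            Finset.mem_insert_of_mem (Finset.mem_erase.2 ⟨Ne.symm ht12, ht₂V⟩)
          rw [h, Finset.mem_insert] at hmem
          rcases hmem with h' | h'
          · exact huV (h' ▸ ht₂V)
          · exact (Finset.notMem_erase t₂ V) h'
        rcases htwofacets σ hσM hσc _ _ (hstar t₁ ht₁V) (hstar t₂ ht₂V)
            (hσsub t₁ ht₁) (hσsub t₂ ht₂) (hstarc t₁ ht₁V) (hstarc t₂ ht₂V) hne12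
            b hbM hσb hbc with h | h <;>
          · rw [h]; exact Finset.insert_subset_insert u (Finset.erase_subset _ _)
      · have hσV : σ ⊆ V := by
          intro x hx
          rcases Finset.mem_insert.1 (haS (hσa hx)) with rfl | h
          · exact absurd hx huσ
          · exact h
        have hsd : (V \ σ).card = 1 := by rw [Finset.card_sdiff_of_subset hσV, hVcard, hσc]
        obtain ⟨t, htdef⟩ := Finset.card_eq_one.1 hsd
        have htmem : t ∈ V \ σ := by rw [htdef]; exact Finset.mem_singleton_self t
        have htV : t ∈ V := (Finset.mem_sdiff.1 htmem).1
        have htσ : t ∉ σ := (Finset.mem_sdiff.1 htmem).2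
        have hσVe : σ = V.erase t := by
          refine Finset.eq_of_subset_of_card_le ?_ ?_
          · intro x hx
            exact Finset.mem_erase.2 ⟨by rintro rfl; exact htσ hx, hσV hx⟩
          · rw [Finset.card_erase_of_mem htV, hVcard, hσc]
        have hne12 : V ≠ insert u (V.erase t) := by
          intro h
          exact huV (h ▸ Finset.mem_insert_self u (V.erase t))
        rcases htwofacets σ hσM hσc V (insert u (V.erase t)) hVM (hstar t htV)
            hσV (by rw [← hσVe]; exact Finset.subset_insert u σ) hVcard (hstarc t htV)
            hne12 b hbM hσb hbc with h | h
        · rw [h]; exact Finset.subset_insert u V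
        · rw [h]; exact Finset.insert_subset_insert u (Finset.erase_subset _ _)
    have hF₀f : F₀ ∈ NPM.facets M 3 := Finset.mem_filter.2 ⟨hF₀M, hF₀c⟩
    have hallfacets : ∀ F ∈ NPM.facets M 3, F ⊆ insert u V := by
      intro F hF
      have hchain := hconn F₀ hF₀f F hF
      clear hF
      induction hchain with
      | refl => rw [hF₀eq]; exact Finset.insert_subset_insert u hTV
      | tail _ hrel ih =>
        obtain ⟨hbf, hcf, hbc3⟩ := hrel
        obtain ⟨hbM', hbc'⟩ := Finset.mem_filter.1 hbf
        obtain ⟨hcM', hcc'⟩ := Finset.mem_filter.1 hcf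
        exact hstep _ _ ih hbM' hbc' hcM' hcc' hbc3
    have hvertsub : NPM.verts M ⊆ insert u V := by
      intro a ha
      obtain ⟨σ, hσ, haσ⟩ := NPMAux.mem_verts.1 ha
      obtain ⟨F, hFM, hσF, hFc⟩ := hpure σ hσ
      exact hallfacets F (Finset.mem_filter.2 ⟨hFM, hFc⟩) (hσF haσ)
    have h5 := Finset.card_le_card hvertsub
    have h6 := Finset.card_insert_le u V
    omega
  · -- main case : bistellar move along T with B = {u, v}
    have hBnM : ({u, v} : Finset α) ∉ M := fun h => hvV ((hadj v).2 ⟨hvu, h⟩)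
    have hpairc : ({u, v} : Finset α).card = 2 := Finset.card_pair (Ne.symm hvu)
    have hlink : NPM.link M T = NPM.stdSphere ({u, v} : Finset α) := by
      ext τ
      rw [NPMAux.mem_link]
      simp only [NPM.stdSphere, Finset.mem_filter, Finset.mem_powerset]
      constructor
      · rintro ⟨hτM, hdisj, hTτ⟩
        obtain ⟨H, hHM, hsub, hHc⟩ := hpure _ hTτ
        have hTH : T ⊆ H := Finset.union_subset_iff.1 hsub |>.1
        have hτH : τ ⊆ H := Finset.union_subset_iff.1 hsub |>.2
        have hτne := hfne τ hτM
        have hcases := htwofacets T hTM hTc F₀ G hF₀M hGM hTF₀ hTG hF₀c hGc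
          (Ne.symm hGne) H hHM hTH hHc
        have key : τ = {u} ∨ τ = {v} := by
          rcases hcases with rfl | rfl
          · left
            have hsu : τ ⊆ {u} := by
              intro x hx
              have hxH := hτH hx
              rw [hF₀eq, Finset.mem_insert] at hxH
              rcases hxH with rfl | hxT
              · exact Finset.mem_singleton_self x
              · exact absurd hxT (Finset.disjoint_left.1 hdisj hx)
            rcases Finset.subset_singleton_iff.1 hsu with rfl | h
            · exact absurd hτne (by simp)
            · exact h
          · right
            have hsu : τ ⊆ {v} := by
              intro x hx
              have hxH := hτH hx
              rw [hGeq, Finset.mem_insert] at hxH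
              rcases hxH with rfl | hxT
              · exact Finset.mem_singleton_self x
              · exact absurd hxT (Finset.disjoint_left.1 hdisj hx)
            rcases Finset.subset_singleton_iff.1 hsu with rfl | h
            · exact absurd hτne (by simp)
            · exact h
        rcases key with rfl | rfl
        · refine ⟨by intro x hx; simp at hx; simp [hx], ⟨u, by simp⟩, ?_⟩
          intro h
          have : v ∈ ({u} : Finset α) := by rw [h]; simp
          rw [Finset.mem_singleton] at this; exact hvu this
        · refine ⟨by intro x hx; simp at hx; simp [hx], ⟨v, by simp⟩, ?_⟩
          intro h
          have : u ∈ ({v} : Finset α) := by rw [h]; simp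
          rw [Finset.mem_singleton] at this; exact hvu this.symm
      · rintro ⟨hsub, hne, hproper⟩
        have key : τ = {u} ∨ τ = {v} := by
          have hss : τ ⊂ ({u, v} : Finset α) := ⟨hsub, fun h =>
            hproper (Finset.Subset.antisymm hsub h)⟩
          have hlt := Finset.card_lt_card hss
          have hpos := Finset.card_pos.2 hne
          have hc1 : τ.card = 1 := by omega
          obtain ⟨a, rfl⟩ := Finset.card_eq_one.1 hc1
          have := hsub (Finset.mem_singleton_self a)
          rw [Finset.mem_insert, Finset.mem_singleton] at this
          rcases this with rfl | rfl
          · exact Or.inl rfl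
          · exact Or.inr rfl
        rcases key with rfl | rfl
        · refine ⟨huM, by simp [huT], ?_⟩
          have heq : T ∪ ({u} : Finset α) = insert u T := by ext x; simp [or_comm]
          rw [heq, ← hF₀eq]; exact hF₀M
        · refine ⟨hdc G hGM {v} (Finset.singleton_subset_iff.2 hvG) ⟨v, by simp⟩,
            by simp [hvT], ?_⟩
          have heq : T ∪ ({v} : Finset α) = insert v T := by ext x; simp [or_comm]
          rw [heq, ← hGeq]; exact hGM
    refine ⟨_, ⟨T, {u, v}, hTM, by norm_num [hTc], by norm_num [hpairc], hBnM, hlink, rfl⟩, ?_⟩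
    -- degree computation in the new complex
    set Fam : Finset (Finset α) := (NPM.facets M 3).filter (fun σ => ¬ T ⊆ σ) ∪
      T.image (fun x => (({u, v} : Finset α) ∪ T).erase x) with hFamdef
    have hNdc := NPMAux.genCx_dc Fam
    have hverts : NPM.verts (NPM.link (NPM.genCx Fam) {u}) = insert v V := by
      ext a
      rw [NPMAux.adj_iff hNdc u a, Finset.mem_insert]
      constructor
      · rintro ⟨hau, hmem⟩
        obtain ⟨G', hG', hsub, -⟩ := NPMAux.mem_genCx.1 hmem
        rcases Finset.mem_union.1 hG' with hG' | hG'
        · obtain ⟨hG'f, -⟩ := Finset.mem_filter.1 hG'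
          obtain ⟨hG'M, hG'c⟩ := Finset.mem_filter.1 hG'f
          exact Or.inr (hfacetV G' hG'M (hsub (by simp)) a (hsub (by simp)) hau)
        · obtain ⟨x, hxT, rfl⟩ := Finset.mem_image.1 hG'
          have haG' := hsub (show a ∈ ({u, a} : Finset α) by simp)
          have haU := Finset.mem_of_mem_erase haG'
          rcases Finset.mem_union.1 haU with h | h
          · rw [Finset.mem_insert, Finset.mem_singleton] at h
            rcases h with rfl | rfl
            · exact absurd rfl hau
            · exact Or.inl rfl
          · exact Or.inr (hTV h)
      · intro h
        have hau : a ≠ u := by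
          rcases h with rfl | h
          · exact hvu
          · rintro rfl; exact huV h
        refine ⟨hau, ?_⟩
        have hmemnew : ∀ x ∈ T, x ≠ a →
            ({u, a} : Finset α) ∈ NPM.genCx Fam → True := fun _ _ _ _ => trivial
        rcases h with rfl | haV
        · -- a = v : use one of the new facets
          obtain ⟨x, hxT⟩ := Finset.card_pos.1 (show 0 < T.card by rw [hTc]; norm_num)
          refine NPMAux.mem_genCx.2 ⟨(({u, a} : Finset α) ∪ T).erase x,
            Finset.mem_union_right _ (Finset.mem_image_of_mem _ hxT), ?_, ⟨u, by simp⟩⟩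
          intro y hy
          rcases Finset.mem_insert.1 hy with rfl | hy
          · exact Finset.mem_erase.2 ⟨fun h => huT (h ▸ hxT), by simp⟩
          · rw [Finset.mem_singleton] at hy; subst hy
            exact Finset.mem_erase.2 ⟨fun h => hvT (h ▸ hxT), by simp⟩
        · by_cases haT : a ∈ T
          · obtain ⟨x, hx⟩ := Finset.card_pos.1
              (show 0 < (T.erase a).card by rw [Finset.card_erase_of_mem haT, hTc]; norm_num)
            have hxT := Finset.mem_of_mem_erase hx
            have hxa : x ≠ a := Finset.ne_of_mem_erase hx
            refine NPMAux.mem_genCx.2 ⟨(({u, v} : Finset α) ∪ T).erase x,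
              Finset.mem_union_right _ (Finset.mem_image_of_mem _ hxT), ?_, ⟨u, by simp⟩⟩
            intro y hy
            rcases Finset.mem_insert.1 hy with rfl | hy
            · exact Finset.mem_erase.2 ⟨fun h => huT (h ▸ hxT), by simp⟩
            · rw [Finset.mem_singleton] at hy; subst hy
              exact Finset.mem_erase.2 ⟨fun h => hxa h.symm, Finset.mem_union_right _ haT⟩
          · -- a ∈ V \ T : use a retained old facet
            have hpair : ({u, a} : Finset α) ∈ M := ((hadj a).1 haV).2
            obtain ⟨H, hHM, hsub, hHc⟩ := hpure _ hpair
            have huH : u ∈ H := hsub (by simp)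
            have haH : a ∈ H := hsub (by simp)
            have hnT : ¬ T ⊆ H := by
              intro hTH
              have hbig : insert u (insert a T) ⊆ H := by
                intro y hy
                rcases Finset.mem_insert.1 hy with rfl | hy
                · exact huH
                · rcases Finset.mem_insert.1 hy with rfl | hy
                  · exact haH
                  · exact hTH hy
              have hc5 : (insert u (insert a T)).card = 5 := by
                rw [Finset.card_insert_of_notMem, Finset.card_insert_of_notMem haT, hTc]
                intro hmem
                rcases Finset.mem_insert.1 hmem with h | h
                · exact hau h.symm
                · exact huT h
              have := Finset.card_le_card hbig
              omega
            exact NPMAux.mem_genCx.2 ⟨H, Finset.mem_union_left _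
              (Finset.mem_filter.2 ⟨Finset.mem_filter.2 ⟨hHM, hHc⟩, hnT⟩), hsub, ⟨u, by simp⟩⟩
    show NPM.degree (NPM.genCx Fam) {u} = 5
    rw [NPM.degree, hverts, Finset.card_insert_of_notMem hvV, hVcard]
end
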